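/- arXiv:2011.00738 — 2 statements merged into one kernel-verified Lean document; each statement's English description precedes it below -/
import Mathlib

section
/- Let Θ ∈ ℂ^{K×I} with K ≤ I and each entry of Θ having modulus at most 1 (so that ‖Θ‖_F² ≤ KI). Then tr((ΘΘᴴ)⁻¹) ≥ K/I, with equality if and only if ΘΘᴴ = I·I_K (i.e., the rows of Θ are pairwise orthogonal with squared norm I). -/
/-!
Write `A = Θ Θᴴ`. For every real `c`, the matrix `Y = Θ - c A⁻¹ Θ` satisfies
`Y Yᴴ = A - 2c·1 + c² A⁻¹`, so taking traces gives `tr A - 2cK + c² tr A⁻¹ = ‖Y‖_F² ≥ 0`, with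
equality only if `Y = 0`, i.e. `A = c·1`. Choosing `c = I` and using `tr A = ‖Θ‖_F² ≤ KI` gives
`I² tr A⁻¹ ≥ 2KI - tr A ≥ KI`; in the equality case both inequalities are equalities, so `A = I·1`.
-/

open Matrix

namespace Matrix

variable {𝕜 m n : Type*} [RCLike 𝕜] [Fintype m] [Fintype n]

theorem trace_mul_conjTranspose_self_eq_sum_norm_sq (X : Matrix m n 𝕜) :
    (X * Xᴴ).trace = ((∑ i, ∑ j, ‖X i j‖ ^ 2 : ℝ) : 𝕜) := by
  simp [trace, mul_apply, RCLike.mul_conj]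

theorem re_trace_mul_conjTranspose_self_le_card_mul_card {X : Matrix m n 𝕜}
    (hX : ∀ i j, ‖X i j‖ ≤ 1) :
    RCLike.re (X * Xᴴ).trace ≤ Fintype.card m * Fintype.card n := by
  rw [trace_mul_conjTranspose_self_eq_sum_norm_sq, RCLike.ofReal_re]
  calc ∑ i, ∑ j, ‖X i j‖ ^ 2 ≤ ∑ _i : m, ∑ _j : n, (1 : ℝ) :=
        Finset.sum_le_sum fun i _ ↦ Finset.sum_le_sum fun j _ ↦
          pow_le_one₀ (norm_nonneg _) (hX i j)
    _ = Fintype.card m * Fintype.card n := by simp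

variable [DecidableEq m]

theorem mul_conjTranspose_sub_smul_inv_mul {X : Matrix m n 𝕜} (hX : IsUnit (X * Xᴴ)) (c : ℝ) :
    (X - (c : 𝕜) • (X * Xᴴ)⁻¹ * X) * (X - (c : 𝕜) • (X * Xᴴ)⁻¹ * X)ᴴ
      = X * Xᴴ - (2 * c : 𝕜) • 1 + (c ^ 2 : 𝕜) • (X * Xᴴ)⁻¹ := by
  have hdet := (isUnit_iff_isUnit_det _).mp hX
  have hinvH : (X * Xᴴ)⁻¹ᴴ = (X * Xᴴ)⁻¹ := by
    rw [conjTranspose_nonsing_inv, conjTranspose_mul, conjTranspose_conjTranspose]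
  have hR : X * (Xᴴ * (X * Xᴴ)⁻¹) = 1 := by rw [← Matrix.mul_assoc, mul_nonsing_inv _ hdet]
  have hL : (X * Xᴴ)⁻¹ * (X * Xᴴ) = 1 := nonsing_inv_mul _ hdet
  simp only [conjTranspose_sub, conjTranspose_mul, conjTranspose_smul, hinvH, RCLike.star_def,
    RCLike.conj_ofReal, Matrix.sub_mul, Matrix.mul_sub, Matrix.smul_mul, Matrix.mul_smul,
    Matrix.mul_assoc]
  rw [hR, hL, Matrix.mul_one, smul_sub, smul_smul]
  module

theorem re_trace_sub_add_sq_mul_re_trace_inv_eq_sum_norm_sq {X : Matrix m n 𝕜}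
    (hX : IsUnit (X * Xᴴ)) (c : ℝ) :
    RCLike.re (X * Xᴴ).trace - 2 * c * Fintype.card m + c ^ 2 * RCLike.re ((X * Xᴴ)⁻¹).trace
      = ∑ i, ∑ j, ‖(X - (c : 𝕜) • (X * Xᴴ)⁻¹ * X) i j‖ ^ 2 := by
  rw [← RCLike.ofReal_re (K := 𝕜) (∑ i, ∑ j, _), ← trace_mul_conjTranspose_self_eq_sum_norm_sq,
    mul_conjTranspose_sub_smul_inv_mul hX]
  simp [trace_sub, trace_add, trace_smul]

theorem two_mul_card_sub_re_trace_le_sq_mul_re_trace_inv {X : Matrix m n 𝕜}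
    (hX : IsUnit (X * Xᴴ)) (c : ℝ) :
    2 * c * Fintype.card m - RCLike.re (X * Xᴴ).trace ≤ c ^ 2 * RCLike.re ((X * Xᴴ)⁻¹).trace := by
  have := re_trace_sub_add_sq_mul_re_trace_inv_eq_sum_norm_sq hX c
  have : 0 ≤ ∑ i, ∑ j, ‖(X - (c : 𝕜) • (X * Xᴴ)⁻¹ * X) i j‖ ^ 2 := by positivity
  linarith

open scoped ComplexOrder in
theorem mul_conjTranspose_eq_smul_one_of_sq_mul_re_trace_inv_eq {X : Matrix m n 𝕜}
    (hX : IsUnit (X * Xᴴ)) {c : ℝ}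
    (h : c ^ 2 * RCLike.re ((X * Xᴴ)⁻¹).trace
      = 2 * c * Fintype.card m - RCLike.re (X * Xᴴ).trace) :
    X * Xᴴ = (c : 𝕜) • 1 := by
  have hY : X - (c : 𝕜) • (X * Xᴴ)⁻¹ * X = 0 := by
    rw [← trace_mul_conjTranspose_self_eq_zero_iff, trace_mul_conjTranspose_self_eq_sum_norm_sq,
      ← re_trace_sub_add_sq_mul_re_trace_inv_eq_sum_norm_sq hX, h]
    simp
  calc X * Xᴴ = (c : 𝕜) • (X * Xᴴ)⁻¹ * X * Xᴴ := by rw [← sub_eq_zero.mp hY]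
    _ = (c : 𝕜) • 1 := by
      simp only [Matrix.smul_mul, Matrix.mul_assoc]
      rw [nonsing_inv_mul _ ((isUnit_iff_isUnit_det _).mp hX)]

end Matrix

/-- orthogonal unit-modulus training minimizes the LS MSE. -/
theorem stmt_9 {K I : ℕ} (hKI : K ≤ I) (Θ : Matrix (Fin K) (Fin I) ℂ)
    (hmod : ∀ i j, ‖Θ i j‖ ≤ 1) (hinv : IsUnit (Θ * Θᴴ)) :
    (K : ℝ) / I ≤ (((Θ * Θᴴ)⁻¹).trace).re
      ∧ ((((Θ * Θᴴ)⁻¹).trace).re = (K : ℝ) / I ↔ Θ * Θᴴ = (I : ℂ) • 1) := by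
  obtain rfl | hI := Nat.eq_zero_or_pos I
  · obtain rfl := Nat.le_zero.mp hKI
    simp [Subsingleton.elim (Θ * Θᴴ) ((0 : ℂ) • 1)]
  have hI' : (0 : ℝ) < I := Nat.cast_pos.mpr hI
  have htrace := re_trace_mul_conjTranspose_self_le_card_mul_card hmod
  have hgap := two_mul_card_sub_re_trace_le_sq_mul_re_trace_inv hinv I
  simp only [Fintype.card_fin, RCLike.re_to_complex] at htrace hgap
  have hlow : (K : ℝ) / I ≤ (((Θ * Θᴴ)⁻¹).trace).re := by
    rw [div_le_iff₀ hI']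
    nlinarith
  refine ⟨hlow, fun h ↦ ?_, fun h ↦ ?_⟩
  · have hsq : (I : ℝ) ^ 2 * (K / I) = K * I := by field_simp
    rw [h] at hgap
    simpa using mul_conjTranspose_eq_smul_one_of_sq_mul_re_trace_inv_eq hinv (c := I) (by
      simp only [Fintype.card_fin, RCLike.re_to_complex, h]
      linarith)
  · have hI0 : (I : ℂ) ≠ 0 := Nat.cast_ne_zero.mpr hI.ne'
    have hcoeff : (I : ℂ)⁻¹ * K = ((K / I : ℝ) : ℂ) := by push_cast; ring
    rw [h, inv_eq_left_inv (B := (I : ℂ)⁻¹ • 1) (by simp [smul_smul, hI0]), trace_smul,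
      trace_one, Fintype.card_fin, smul_eq_mul, hcoeff, Complex.ofReal_re]
end

section
/- Let Θ₁ ∈ ℂ^{M₁×I} and ψ ∈ ℂ^{I} with |ψ_q| = 1 for all q, and suppose Θ₁Θ₁ᴴ = I·I_{M₁}, Θ₁·1 = 0, Θ₁·ψ = 0, and Θ₁·diag(ψᴴ)·Θ₁ᴴ = 0. Define Ω ∈ ℂ^{(2M₁+1)×I} whose q-th column is [ψ_q^*; ψ_q^*·θ^{(q)}; θ^{(q)}] where θ^{(q)} is the q-th column of Θ₁ and ψᴴ = [ψ_1^*,…,ψ_I^*]. Then ΩΩᴴ = I·I_{2M₁+1}. -/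
/-! Ω is the stack of the row ψᴴ, the block Θ₁ diag(ψᴴ) and Θ₁. Since |ψ_q| = 1, diag(ψᴴ) is
unitary, so the Gram matrix ΩΩᴴ has diagonal blocks ψᴴψ = I and Θ₁Θ₁ᴴ = I·Id (twice), while its
off-diagonal blocks are, up to conjugate transposition, (Θ₁ψ)ᴴ, (Θ₁1)ᴴ and Θ₁ diag(ψᴴ) Θ₁ᴴ,
all zero by hypothesis. -/

open Matrix

namespace Matrix

variable {R ι m₁ m₂ n : Type*} [Fintype n]

theorem fromRows_mul_conjTranspose_fromRows_eq_smul_one [Semiring R] [StarRing R]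
    [DecidableEq m₁] [DecidableEq m₂] {A : Matrix m₁ n R} {B : Matrix m₂ n R} {c : R}
    (hA : A * Aᴴ = c • 1) (hB : B * Bᴴ = c • 1) (hAB : A * Bᴴ = 0) :
    fromRows A B * (fromRows A B)ᴴ = c • 1 := by
  have hBA : B * Aᴴ = 0 := by simpa using congrArg conjTranspose hAB
  rw [conjTranspose_fromRows_eq_fromCols_conjTranspose, fromRows_mul_fromCols, hA, hB, hAB, hBA,
    ← fromBlocks_one, fromBlocks_smul, smul_zero, smul_zero]

theorem mul_diagonal_mul_conjTranspose_mul_diagonal [CommSemiring R] [StarRing R] [DecidableEq n]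
    (A : Matrix m₁ n R) (B : Matrix m₂ n R) {d : n → R} (hd : ∀ i, d i * star (d i) = 1) :
    A * diagonal d * (B * diagonal d)ᴴ = A * Bᴴ := by
  have hD : diagonal d * (diagonal d)ᴴ = 1 := by
    rw [diagonal_conjTranspose, diagonal_mul_diagonal, ← diagonal_one]
    exact congrArg diagonal (funext hd)
  rw [conjTranspose_mul, Matrix.mul_assoc, ← Matrix.mul_assoc (diagonal d), hD, Matrix.one_mul]

theorem replicateRow_mul_conjTranspose_replicateRow [Semiring R] [StarRing R] [Unique ι]
    (v : n → R) : replicateRow ι v * (replicateRow ι v)ᴴ = (v ⬝ᵥ star v) • 1 := by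
  ext i j
  simp [Subsingleton.elim i j, dotProduct]

theorem replicateRow_star_mul_conjTranspose_eq_zero [Semiring R] [StarRing R]
    {M : Matrix m₁ n R} {v : n → R} (hv : M *ᵥ v = 0) : replicateRow ι (star v) * Mᴴ = 0 := by
  calc replicateRow ι (star v) * Mᴴ = (M * replicateCol ι v)ᴴ := by
        rw [conjTranspose_mul, conjTranspose_replicateCol]
    _ = 0 := by rw [← replicateCol_mulVec, hv, replicateCol_zero, conjTranspose_zero]

end Matrix

/-- the four orthogonality conditions imply ΩΩᴴ = I·Id (equations (24)–(28)). -/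
theorem stmt_14 {M₁ I : ℕ} (Θ₁ : Matrix (Fin M₁) (Fin I) ℂ) (ψ : Fin I → ℂ)
    (hψ : ∀ q, ‖ψ q‖ = 1)
    (h1 : Θ₁ * Θ₁ᴴ = (I : ℂ) • 1)
    (h2 : Θ₁ *ᵥ (fun _ => 1) = 0)
    (h3 : Θ₁ *ᵥ ψ = 0)
    (h4 : Θ₁ * Matrix.diagonal (fun q => star (ψ q)) * Θ₁ᴴ = 0)
    (Ωm : Matrix (Unit ⊕ Fin M₁ ⊕ Fin M₁) (Fin I) ℂ)
    (hΩ : ∀ q, (Ωm (Sum.inl ()) q = star (ψ q))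
      ∧ (∀ m, Ωm (Sum.inr (Sum.inl m)) q = star (ψ q) * Θ₁ m q)
      ∧ (∀ m, Ωm (Sum.inr (Sum.inr m)) q = Θ₁ m q)) :
    Ωm * Ωmᴴ = (I : ℂ) • 1 := by
  set D := diagonal (star ψ)
  have hψψ : ∀ q, starRingEnd ℂ (ψ q) * ψ q = 1 := fun q => by simp [Complex.conj_mul', hψ q]
  have hΩm : Ωm = fromRows (replicateRow Unit (star ψ)) (fromRows (Θ₁ * D) Θ₁) := by
    ext (_ | m | m) q <;> simp [D, hΩ q, mul_comm]
  have hDψ : D *ᵥ ψ = fun _ => 1 := funext fun q => by simp [D, mulVec_diagonal, hψψ]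
  have hrow : replicateRow Unit (star ψ) * (replicateRow Unit (star ψ))ᴴ = (I : ℂ) • 1 := by
    rw [replicateRow_mul_conjTranspose_replicateRow, star_star]
    simp [dotProduct, hψψ]
  have hlower : fromRows (Θ₁ * D) Θ₁ * (fromRows (Θ₁ * D) Θ₁)ᴴ = (I : ℂ) • 1 :=
    fromRows_mul_conjTranspose_fromRows_eq_smul_one (by
      rw [mul_diagonal_mul_conjTranspose_mul_diagonal _ _ fun q => by simpa [mul_comm] using hψψ q,
        h1]) h1 h4
  have hcross : replicateRow Unit (star ψ) * (fromRows (Θ₁ * D) Θ₁)ᴴ = 0 := by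
    rw [conjTranspose_fromRows_eq_fromCols_conjTranspose, mul_fromCols,
      replicateRow_star_mul_conjTranspose_eq_zero h3,
      replicateRow_star_mul_conjTranspose_eq_zero (by rw [← mulVec_mulVec, hDψ, h2]), fromCols_zero]
  rw [hΩm]
  exact fromRows_mul_conjTranspose_fromRows_eq_smul_one hrow hlower hcross
end
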